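/- Convergence rate of the meta-algorithm with per-round approximate best responses: let K ⊆ ℝ^n and Λ ⊆ ℝ^n be nonempty convex compact sets, g : Λ → ℝ continuous and convex, L(d, λ) = ⟨λ, d⟩ − g(λ), and f : ℝ^n → ℝ with f(d) = max_{λ ∈ Λ} L(d, λ) for all d ∈ K. Suppose for each k = 1,…,K the iterate d_k ∈ K is an ε_k-approximate best response to λ_k ∈ Λ, i.e. L(d_k, λ_k) − min_{d ∈ K} L(d, λ_k) ≤ ε_k with ε_k = 1/√k, and the cost iterates satisfy the average-regret bound (1/K)(max_{λ ∈ Λ} Σ_{k=1}^K L(d_k, λ) − Σ_{k=1}^K L(d_k, λ_k)) ≤ c₀/√K. Then the average iterate d̄ = (1/K) Σ_k d_k satisfies f(d̄) − min_{d ∈ K} f(d) ≤ (2 + c₀)/√K. -/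

import Mathlib

/-! Since `L` is affine in `d`, `f d̄` is `1/N` times the `Λ`-player's best total payoff against
`d₁, …, d_N`; weak duality bounds `min_K f` below by the average of the per-round minima
`min_K L(·, λ_k)`. So the gap of `d̄` is at most the average regret plus the average best-response
error, and `∑_{k ≤ N} 1/√k ≤ 2√N`. -/

open Finset

lemma sum_range_one_div_sqrt_succ_le (N : ℕ) :
    ∑ k ∈ range N, 1 / √((k : ℝ) + 1) ≤ 2 * √N := by
  induction N with
  | zero => simp
  | succ m ih =>
    have hpos : 0 < √((m : ℝ) + 1) := by positivity
    -- `2 √m √(m+1) ≤ 2m + 1` (AM-GM)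
    have hstep : 1 / √((m : ℝ) + 1) ≤ 2 * √((m : ℝ) + 1) - 2 * √m := by
      rw [div_le_iff₀ hpos]
      nlinarith [Real.sq_sqrt (show (0 : ℝ) ≤ m + 1 by positivity),
        Real.sq_sqrt m.cast_nonneg, sq_nonneg (√((m : ℝ) + 1) - √m)]
    rw [sum_range_succ, Nat.cast_succ]
    linarith

lemma Convex.inv_card_smul_sum_mem {E ι : Type*} [AddCommGroup E] [Module ℝ E]
    [Fintype ι] [Nonempty ι] {K : Set E} (hK : Convex ℝ K) {d : ι → E} (hd : ∀ k, d k ∈ K) :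
    (Fintype.card ι : ℝ)⁻¹ • ∑ k, d k ∈ K := by
  have := hK.centerMass_mem (t := univ) (w := fun _ => (1 : ℝ)) (fun _ _ => zero_le_one)
    (by simp [Fintype.card_pos]) (fun k _ => hd k)
  simpa [centerMass] using this

lemma dotProduct_inv_card_smul_sum_sub {m ι : Type*} [Fintype m] [Fintype ι] [Nonempty ι]
    (l : m → ℝ) (d : ι → m → ℝ) (c : ℝ) :
    l ⬝ᵥ ((Fintype.card ι : ℝ)⁻¹ • ∑ k, d k) - c
      = (Fintype.card ι : ℝ)⁻¹ * ∑ k, (l ⬝ᵥ d k - c) := by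
  rw [dotProduct_smul, dotProduct_sum, sum_sub_distrib, sum_const, card_univ, nsmul_eq_mul,
    smul_eq_mul, mul_sub, ← mul_assoc, inv_mul_cancel₀ (by positivity), one_mul]

lemma Real.sSup_image_const_mul_of_nonneg {β : Type*} (s : Set β) (F : β → ℝ) {a : ℝ} (ha : 0 ≤ a) :
    sSup ((fun l => a * F l) '' s) = a * sSup (F '' s) := by
  rw [← smul_eq_mul, ← Real.sSup_smul_of_nonneg ha, ← Set.image_smul, Set.image_image]
  rfl

lemma inv_card_mul_sum_sInf_le_sInf {α ι : Type*} [Fintype ι] [Nonempty ι] {K : Set α}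
    (hK : K.Nonempty) (F : ι → α → ℝ) (h : α → ℝ) (hF : ∀ k, BddBelow (F k '' K))
    (hFh : ∀ x ∈ K, ∀ k, F k x ≤ h x) :
    (Fintype.card ι : ℝ)⁻¹ * ∑ k, sInf (F k '' K) ≤ sInf (h '' K) := by
  refine le_csInf (hK.image h) ?_
  rintro _ ⟨x, hx, rfl⟩
  rw [inv_mul_le_iff₀ (by positivity)]
  calc ∑ k, sInf (F k '' K) ≤ ∑ _k : ι, h x :=
        sum_le_sum fun k _ => (csInf_le (hF k) ⟨x, hx, rfl⟩).trans (hFh x hx k)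
    _ = Fintype.card ι * h x := by simp

theorem gap_le_regret_add_bestResponseError {α β ι : Type*} [Fintype ι] [Nonempty ι]
    (L : α → β → ℝ) (K : Set α) (Λ : Set β) (f : α → ℝ)
    (hf : ∀ x ∈ K, f x = sSup ((fun l => L x l) '' Λ))
    (hΛbdd : ∀ x ∈ K, BddAbove ((fun l => L x l) '' Λ))
    (hKbdd : ∀ l ∈ Λ, BddBelow ((fun x => L x l) '' K))
    (d : ι → α) (lam : ι → β) (hd : ∀ k, d k ∈ K) (hlam : ∀ k, lam k ∈ Λ)
    {dbar : α} (hdbar : dbar ∈ K)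
    (hLdbar : ∀ l, L dbar l = (Fintype.card ι : ℝ)⁻¹ * ∑ k, L (d k) l) :
    f dbar - sInf (f '' K)
      ≤ (Fintype.card ι : ℝ)⁻¹ * (sSup ((fun l => ∑ k, L (d k) l) '' Λ) - ∑ k, L (d k) (lam k))
        + (Fintype.card ι : ℝ)⁻¹ * ∑ k, (L (d k) (lam k) - sInf ((fun x => L x (lam k)) '' K)) := by
  have hfdbar : f dbar = (Fintype.card ι : ℝ)⁻¹ * sSup ((fun l => ∑ k, L (d k) l) '' Λ) := by
    rw [hf dbar hdbar, ← Real.sSup_image_const_mul_of_nonneg _ _ (by positivity)]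
    simp only [hLdbar]
  have hweakDuality := inv_card_mul_sum_sInf_le_sInf ⟨_, hd (Classical.arbitrary ι)⟩
    (fun k x => L x (lam k)) f (fun k => hKbdd _ (hlam k))
    (fun x hx k => by rw [hf x hx]; exact le_csSup (hΛbdd x hx) ⟨lam k, hlam k, rfl⟩)
  calc f dbar - sInf (f '' K)
      ≤ (Fintype.card ι : ℝ)⁻¹ * sSup ((fun l => ∑ k, L (d k) l) '' Λ)
        - (Fintype.card ι : ℝ)⁻¹ * ∑ k, sInf ((fun x => L x (lam k)) '' K) := by
        linarith
    _ = _ := by rw [sum_sub_distrib]; ring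

theorem meta_algorithm_rate_with_approx_best_response_general
    {n N : ℕ} (hN : 0 < N)
    (K Λ : Set (Fin n → ℝ))
    (hKcv : Convex ℝ K) (hKcp : IsCompact K)
    (hΛcp : IsCompact Λ)
    (g : (Fin n → ℝ) → ℝ) (hgcont : ContinuousOn g Λ)
    (L : (Fin n → ℝ) → (Fin n → ℝ) → ℝ)
    (hL : L = fun x l => (∑ i, l i * x i) - g l)
    (f : (Fin n → ℝ) → ℝ)
    (hf : ∀ x ∈ K, f x = sSup ((fun l => L x l) '' Λ))
    (d lam : Fin N → (Fin n → ℝ))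
    (hd : ∀ k, d k ∈ K) (hlam : ∀ k, lam k ∈ Λ)
    (hbr : ∀ k : Fin N,
      L (d k) (lam k) - sInf ((fun x => L x (lam k)) '' K)
        ≤ 1 / Real.sqrt ((k : ℕ) + 1))
    (c₀ : ℝ)
    (hcost : (1 / (N : ℝ)) *
        (sSup ((fun l => ∑ k, L (d k) l) '' Λ) - ∑ k, L (d k) (lam k))
        ≤ c₀ / Real.sqrt N) :
    f ((N : ℝ)⁻¹ • ∑ k, d k) - sInf (f '' K) ≤ (2 + c₀) / Real.sqrt N := by
  have : Nonempty (Fin N) := Fin.pos_iff_nonempty.mp hN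
  have hLcont_snd : ∀ x, ContinuousOn (fun l => L x l) Λ := fun x => by
    rw [hL]; fun_prop
  have hLcont_fst : ∀ l, Continuous fun x => L x l := fun l => by
    rw [hL]; fun_prop
  have hgap := gap_le_regret_add_bestResponseError L K Λ f hf
    (fun x _ => hΛcp.bddAbove_image (hLcont_snd x))
    (fun l _ => hKcp.bddBelow_image (hLcont_fst l).continuousOn) d lam hd hlam
    (hKcv.inv_card_smul_sum_mem hd)
    (fun l => by rw [hL]; exact dotProduct_inv_card_smul_sum_sub l d (g l))
  have herr : ∑ k, (L (d k) (lam k) - sInf ((fun x => L x (lam k)) '' K)) ≤ 2 * √N :=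
    calc _ ≤ ∑ k : Fin N, 1 / √((k : ℕ) + 1 : ℝ) := sum_le_sum fun k _ => hbr k
      _ = ∑ k ∈ range N, 1 / √((k : ℝ) + 1) :=
          Fin.sum_univ_eq_sum_range (fun k => 1 / √((k : ℝ) + 1)) N
      _ ≤ 2 * √N := sum_range_one_div_sqrt_succ_le N
  simp only [Fintype.card_fin] at hgap
  calc _ ≤ _ := hgap
    _ ≤ c₀ / √N + (N : ℝ)⁻¹ * (2 * √N) :=
        add_le_add (by simpa only [one_div] using hcost) (by gcongr)
    _ = (2 + c₀) / √N := by
        field_simp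
        rw [Real.sq_sqrt N.cast_nonneg]
        ring

/-- Convergence rate of the meta-algorithm with per-round approximate best
responses. With `L(d,λ) = ⟨λ,d⟩ - g(λ)`, `f(d) = max_{λ∈Λ} L(d,λ)` on `K`, per-round
best-response accuracy `ε_k = 1/√k` (iteration `k ∈ {1,…,N}` is index `k+1` for
`k : Fin N`), and cost-player average regret at most `c₀/√N`, the averaged iterate
satisfies `f(d̄) - min_K f ≤ (2 + c₀)/√N`. -/
theorem meta_algorithm_rate_with_approx_best_response
    {n N : ℕ} (hN : 0 < N)
    (K Λ : Set (Fin n → ℝ))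
    (hKne : K.Nonempty) (hKcv : Convex ℝ K) (hKcp : IsCompact K)
    (hΛne : Λ.Nonempty) (hΛcv : Convex ℝ Λ) (hΛcp : IsCompact Λ)
    (g : (Fin n → ℝ) → ℝ) (hgcont : ContinuousOn g Λ) (hgconv : ConvexOn ℝ Λ g)
    (L : (Fin n → ℝ) → (Fin n → ℝ) → ℝ)
    (hL : L = fun x l => (∑ i, l i * x i) - g l)
    (f : (Fin n → ℝ) → ℝ)
    (hf : ∀ x ∈ K, f x = sSup ((fun l => L x l) '' Λ))
    (d lam : Fin N → (Fin n → ℝ))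
    (hd : ∀ k, d k ∈ K) (hlam : ∀ k, lam k ∈ Λ)
    (hbr : ∀ k : Fin N,
      L (d k) (lam k) - sInf ((fun x => L x (lam k)) '' K)
        ≤ 1 / Real.sqrt ((k : ℕ) + 1))
    (c₀ : ℝ)
    (hcost : (1 / (N : ℝ)) *
        (sSup ((fun l => ∑ k, L (d k) l) '' Λ) - ∑ k, L (d k) (lam k))
        ≤ c₀ / Real.sqrt N) :
    f ((N : ℝ)⁻¹ • ∑ k, d k) - sInf (f '' K) ≤ (2 + c₀) / Real.sqrt N :=
  meta_algorithm_rate_with_approx_best_response_general hN K Λ hKcv hKcp hΛcp g hgcont L hL f hf d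
    lam hd hlam hbr c₀ hcost
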